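/- Let f(x,y) = sqrt((x+y−2)/(x+y)) − sqrt((x+y−2)/(x·y)). For every integer y ≥ 2, one has f(1,2) + f(2,3) + f(3,y) > 0. -/
import Mathlib


noncomputable def f (x y : ℝ) : ℝ :=
  Real.sqrt ((x + y - 2) / (x + y)) - Real.sqrt ((x + y - 2) / (x * y))

theorem f12_f23_f3y_pos (y : ℤ) (hy : 2 ≤ y) :
    f 1 2 + f 2 3 + f 3 y > 0 := by
  have ht : (2:ℝ) ≤ (y:ℝ) := by exact_mod_cast hy
  set t : ℝ := (y:ℝ) with htdef
  have ht0 : (0:ℝ) < t := by linarith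
  have hA : Real.sqrt (3/5) ≤ Real.sqrt ((3 + t - 2)/(3 + t)) := by
    apply Real.sqrt_le_sqrt
    rw [div_le_div_iff₀ (by norm_num) (by linarith)]
    linarith
  have hB : Real.sqrt ((3 + t - 2)/(3 * t)) ≤ Real.sqrt (1/2) := by
    apply Real.sqrt_le_sqrt
    rw [div_le_div_iff₀ (by linarith) (by norm_num)]
    linarith
  have e1 : f 1 2 = Real.sqrt (1/3) - Real.sqrt (1/2) := by norm_num [f]
  have e2 : f 2 3 = Real.sqrt (3/5) - Real.sqrt (1/2) := by norm_num [f]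
  have h3 : f 3 t ≥ Real.sqrt (3/5) - Real.sqrt (1/2) := by
    unfold f; linarith
  have b1 : (0.5773:ℝ) < Real.sqrt (1/3) := by
    nlinarith [Real.sq_sqrt (by norm_num : (0:ℝ) ≤ 1/3), Real.sqrt_nonneg (1/3:ℝ)]
  have b2 : (0.7745:ℝ) < Real.sqrt (3/5) := by
    nlinarith [Real.sq_sqrt (by norm_num : (0:ℝ) ≤ 3/5), Real.sqrt_nonneg (3/5:ℝ)]
  have b3 : Real.sqrt (1/2) < 0.70711 := by
    nlinarith [Real.sq_sqrt (by norm_num : (0:ℝ) ≤ 1/2), Real.sqrt_nonneg (1/2:ℝ)]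
  rw [e1, e2]
  linarith
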